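/- arXiv:2410.08992 — 6 statements merged into one kernel-verified Lean document; each statement's English description precedes it below -/
import Mathlib

section
/- Let X and Y be k-heights of a finite graph G with X ≠ Y, and suppose the set S := {v ∈ V : X(v) < Y(v)} is nonempty. Then there exists a vertex v₀ ∈ S such that incrementing X at v₀ by 1 yields a valid k-height. Consequently there exists a k-height X' differing from X on exactly one vertex, with distance δ(X',Y) = δ(X,Y) − 1, where δ(X,Y) := Σ_{v∈V} |X(v) − Y(v)|. -/
/-!
Take `v₀` with `X v₀ < Y v₀` and `X v₀` minimal among such vertices. A neighbour `w` with
`X w < X v₀` would have `X w ≤ X v₀ - 1 < Y v₀ - 1 ≤ Y w`, contradicting minimality; so every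
neighbour of `v₀` has height at least `X v₀`, and raising `X v₀` by one keeps all edge
differences at most one, while `X v₀ + 1 ≤ Y v₀ ≤ k`.
-/

def IsKHeight {V : Type*} (G : SimpleGraph V) (k : ℕ) (φ : V → ℕ) : Prop :=
  (∀ v, φ v ≤ k) ∧ ∀ ⦃v w : V⦄, G.Adj v w → |(φ v : ℤ) - (φ w : ℤ)| ≤ 1

/-- The distance `δ(X,Y) = Σ_v |X v − Y v|` between two height functions. -/
def heightDist {V : Type*} [Fintype V] (X Y : V → ℕ) : ℕ :=
  ∑ v : V, ((X v : ℤ) - (Y v : ℤ)).natAbs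

open Function Finset

namespace IsKHeight

variable {V : Type*} {G : SimpleGraph V} {k l : ℕ} {X Y : V → ℕ}

theorem lt_of_adj_of_lt (hX : IsKHeight G k X) (hY : IsKHeight G l Y) {v w : V}
    (hadj : G.Adj v w) (hv : X v < Y v) (hw : X w < X v) : X w < Y w := by
  have hXvw := hX.2 hadj
  have hYvw := hY.2 hadj
  rw [abs_le] at hXvw hYvw
  omega

theorem update_succ [DecidableEq V] (hX : IsKHeight G k X) {v : V} (hk : X v < k)
    (hnb : ∀ w, G.Adj v w → X v ≤ X w) : IsKHeight G k (update X v (X v + 1)) := by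
  refine ⟨fun u => ?_, fun u w hadj => ?_⟩
  · rcases eq_or_ne u v with rfl | hu
    · rw [update_self]; omega
    · rw [update_of_ne hu]; exact hX.1 u
  have huw := hX.2 hadj
  rw [abs_le] at huw ⊢
  rcases eq_or_ne u v with rfl | hu
  · have hw := hnb w hadj
    rw [update_self, update_of_ne hadj.ne.symm]
    push_cast
    omega
  rcases eq_or_ne w v with rfl | hw
  · have hu' := hnb u hadj.symm
    rw [update_self, update_of_ne hu]
    push_cast
    omega
  · rw [update_of_ne hu, update_of_ne hw]
    exact huw

end IsKHeight

theorem heightDist_update_succ_add_one {V : Type*} [Fintype V] [DecidableEq V]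
    {X Y : V → ℕ} {v : V} (hv : X v < Y v) :
    heightDist (update X v (X v + 1)) Y + 1 = heightDist X Y := by
  unfold heightDist
  rw [← add_sum_erase _ _ (mem_univ v), ← add_sum_erase _ _ (mem_univ v), update_self,
    sum_congr rfl fun w hw => by rw [update_of_ne (ne_of_mem_erase hw)]]
  push_cast
  omega

theorem exists_increment_step_general {V : Type*} [Fintype V] [DecidableEq V]
    (G : SimpleGraph V) (k : ℕ) (X Y : V → ℕ)
    (hX : IsKHeight G k X) (hY : IsKHeight G k Y)
    (hS : ∃ v, X v < Y v) :
    ∃ v₀, X v₀ < Y v₀ ∧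
      IsKHeight G k (Function.update X v₀ (X v₀ + 1)) ∧
      heightDist (Function.update X v₀ (X v₀ + 1)) Y = heightDist X Y - 1 := by
  obtain ⟨v, hv⟩ := hS
  obtain ⟨v₀, hv₀, hmin⟩ :=
    exists_min_image (univ.filter fun w => X w < Y w) X ⟨v, by simpa using hv⟩
  simp only [mem_filter, mem_univ, true_and] at hv₀ hmin
  have hnb : ∀ w, G.Adj v₀ w → X v₀ ≤ X w := fun w hadj =>
    not_lt.1 fun hw => (hmin w (hX.lt_of_adj_of_lt hY hadj hv₀ hw)).not_gt hw
  have hdist := heightDist_update_succ_add_one hv₀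
  exact ⟨v₀, hv₀, hX.update_succ (hv₀.trans_le (hY.1 v₀)) hnb, by omega⟩

/-- If `X ≠ Y` are `k`-heights and `S = {v | X v < Y v}` is nonempty, then there
is `v₀ ∈ S` such that incrementing `X` at `v₀` yields a valid `k`-height;
the resulting `k`-height `X'` differs from `X` exactly at `v₀` and satisfies
`δ(X',Y) = δ(X,Y) − 1`. -/
theorem exists_increment_step {V : Type*} [Fintype V] [DecidableEq V]
    (G : SimpleGraph V) (k : ℕ) (X Y : V → ℕ)
    (hX : IsKHeight G k X) (hY : IsKHeight G k Y) (hne : X ≠ Y)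
    (hS : ∃ v, X v < Y v) :
    ∃ v₀, X v₀ < Y v₀ ∧
      IsKHeight G k (Function.update X v₀ (X v₀ + 1)) ∧
      heightDist (Function.update X v₀ (X v₀ + 1)) Y = heightDist X Y - 1 :=
  exists_increment_step_general G k X Y hX hY hS
end

section
/- For any two k-heights X, Y of a finite graph G, the minimum number of single-vertex ±1 moves (each intermediate configuration being a valid k-height) needed to transform X into Y equals δ(X,Y) = Σ_{v∈V} |X(v)−Y(v)|. -/
/-- A single-vertex ±1 move between `k`-heights: both configurations are valid
`k`-heights and they agree everywhere except at one vertex, where they differ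
by exactly one. -/
def HeightStep {V : Type*} (G : SimpleGraph V) (k : ℕ) (X Y : V → ℕ) : Prop :=
  IsKHeight G k X ∧ IsKHeight G k Y ∧
    ∃ v, (∀ w, w ≠ v → Y w = X w) ∧ (Y v = X v + 1 ∨ X v = Y v + 1)

/-!
Lower bound: a single move changes one coordinate by one, so it changes `δ(·, Y)` by at most one.

Upper bound: if `X v > Y v` somewhere, lower `X` at a vertex `v` where `X v` is maximal among such
vertices. A neighbour `w` with `X w > Y w` has `X w ≤ X v` by maximality, and any other neighbour
has `X w ≤ Y w ≤ Y v + 1 ≤ X v`; so the move is admissible and decreases `δ(X, Y)` by one.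
If instead `X ≤ Y` pointwise, apply the same move to `Y` and reverse the path, moves being symmetric.
-/

section

variable {V : Type*} {G : SimpleGraph V} {k : ℕ}

theorem IsKHeight.update [DecidableEq V] {X : V → ℕ} (hX : IsKHeight G k X) {v : V} {a : ℕ}
    (hak : a ≤ k) (hadj : ∀ w, G.Adj v w → |(a : ℤ) - X w| ≤ 1) :
    IsKHeight G k (Function.update X v a) := by
  refine ⟨fun w => ?_, fun w₁ w₂ hw => ?_⟩
  · rcases eq_or_ne w v with rfl | hw
    · simpa using hak
    · simpa [hw] using hX.1 w
  · rcases eq_or_ne w₁ v with rfl | h₁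
    · simpa [hw.ne'] using hadj w₂ hw
    rcases eq_or_ne w₂ v with rfl | h₂
    · simpa [h₁, abs_sub_comm] using hadj w₁ hw.symm
    simpa [h₁, h₂] using hX.2 hw

theorem IsKHeight.update_pred [DecidableEq V] {X Y : V → ℕ} (hX : IsKHeight G k X)
    (hY : IsKHeight G k Y) {v : V} (hv : Y v < X v) (hmax : ∀ w, Y w < X w → X w ≤ X v) :
    IsKHeight G k (Function.update X v (X v - 1)) := by
  refine hX.update ((Nat.sub_le _ _).trans (hX.1 v)) fun w hw => ?_
  have hXw : X w ≤ X v := by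
    by_cases hw' : Y w < X w
    · exact hmax w hw'
    · have := abs_le.mp (hY.2 hw)
      omega
  have := abs_le.mp (hX.2 hw)
  rw [abs_le]
  omega

theorem HeightStep.symm {X Y : V → ℕ} (h : HeightStep G k X Y) : HeightStep G k Y X := by
  obtain ⟨hX, hY, v, hoff, hv⟩ := h
  exact ⟨hY, hX, v, fun w hw => (hoff w hw).symm, hv.symm⟩

variable (G k) in
def HeightPath (n : ℕ) (X Y : V → ℕ) : Prop :=
  ∃ f : ℕ → V → ℕ, f 0 = X ∧ f n = Y ∧ ∀ i < n, HeightStep G k (f i) (f (i + 1))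

theorem heightPath_zero_iff {X Y : V → ℕ} : HeightPath G k 0 X Y ↔ X = Y :=
  ⟨fun ⟨f, h0, h1, _⟩ => h0.symm.trans h1, fun h => ⟨fun _ => X, rfl, h, by simp⟩⟩

theorem heightPath_succ_iff {n : ℕ} {X Y : V → ℕ} :
    HeightPath G k (n + 1) X Y ↔ ∃ X', HeightStep G k X X' ∧ HeightPath G k n X' Y := by
  constructor
  · rintro ⟨f, h0, hn, hf⟩
    exact ⟨f 1, h0 ▸ hf 0 n.succ_pos, fun i => f (i + 1), rfl, hn, fun i hi => hf (i + 1) (by omega)⟩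
  · rintro ⟨X', hXX', f, h0, hn, hf⟩
    refine ⟨fun | 0 => X | i + 1 => f i, rfl, hn, fun i hi => ?_⟩
    rcases i with _ | i
    · show HeightStep G k X (f 0)
      rwa [h0]
    · exact hf i (by omega)

theorem HeightPath.symm {n : ℕ} {X Y : V → ℕ} (h : HeightPath G k n X Y) :
    HeightPath G k n Y X := by
  obtain ⟨f, h0, hn, hf⟩ := h
  refine ⟨fun i => f (n - i), by simpa using hn, by simpa using h0, fun i hi => ?_⟩
  have := (hf (n - (i + 1)) (by omega)).symm
  rwa [show n - (i + 1) + 1 = n - i by omega] at this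

section heightDist

variable [Fintype V]

theorem heightDist_comm (X Y : V → ℕ) : heightDist X Y = heightDist Y X :=
  Finset.sum_congr rfl fun _ _ => by omega

theorem heightDist_eq_zero_iff {X Y : V → ℕ} : heightDist X Y = 0 ↔ X = Y := by
  refine ⟨fun h => funext fun v => ?_, fun h => Finset.sum_eq_zero fun v _ => by simp [h]⟩
  have := Finset.sum_eq_zero_iff.mp h v (Finset.mem_univ v)
  omega

theorem heightDist_update_add [DecidableEq V] (X Y : V → ℕ) (v : V) (a : ℕ) :
    heightDist (Function.update X v a) Y + ((X v : ℤ) - Y v).natAbs =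
      heightDist X Y + ((a : ℤ) - Y v).natAbs := by
  have hsplit := fun Z : V → ℕ => (Finset.add_sum_erase Finset.univ
    (fun w => ((Z w : ℤ) - Y w).natAbs) (Finset.mem_univ v)).symm
  have hrest : ∑ w ∈ Finset.univ.erase v, ((Function.update X v a w : ℤ) - Y w).natAbs =
      ∑ w ∈ Finset.univ.erase v, ((X w : ℤ) - Y w).natAbs :=
    Finset.sum_congr rfl fun w hw => by rw [Function.update_of_ne (Finset.ne_of_mem_erase hw)]
  rw [heightDist, heightDist, hsplit, hsplit X, hrest, Function.update_self]
  omega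

theorem heightDist_le_of_heightStep {X X' : V → ℕ} (h : HeightStep G k X X') (Y : V → ℕ) :
    heightDist X Y ≤ heightDist X' Y + 1 := by
  classical
  obtain ⟨-, -, v, hoff, hv⟩ := h
  have hX' : X' = Function.update X v (X' v) := by
    funext w
    rcases eq_or_ne w v with rfl | hw
    · simp
    · simp [hw, hoff w hw]
  have := heightDist_update_add X Y v (X' v)
  rw [← hX'] at this
  omega

theorem HeightPath.heightDist_le {n : ℕ} {X Y : V → ℕ} (h : HeightPath G k n X Y) :
    heightDist X Y ≤ n := by
  induction n generalizing X with
  | zero => simp [heightDist_eq_zero_iff.mpr (heightPath_zero_iff.mp h)]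
  | succ n ih =>
    obtain ⟨X', hXX', hX'Y⟩ := heightPath_succ_iff.mp h
    exact (heightDist_le_of_heightStep hXX' Y).trans (Nat.add_le_add_right (ih hX'Y) 1)

theorem exists_heightStep_heightDist_add_one_eq {X Y : V → ℕ} (hX : IsKHeight G k X)
    (hY : IsKHeight G k Y) (h : ∃ v, Y v < X v) :
    ∃ X', HeightStep G k X X' ∧ heightDist X' Y + 1 = heightDist X Y := by
  classical
  obtain ⟨v, hv, hmax⟩ := Finset.exists_max_image {w | Y w < X w} X
    (by simpa [Finset.Nonempty] using h)
  simp only [Finset.mem_filter, Finset.mem_univ, true_and] at hv hmax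
  refine ⟨Function.update X v (X v - 1),
    ⟨hX, hX.update_pred hY hv hmax, v, fun w hw => by simp [hw], Or.inr (by rw [Function.update_self]; omega)⟩,
    ?_⟩
  have := heightDist_update_add X Y v (X v - 1)
  omega

theorem heightPath_heightDist {X Y : V → ℕ} (hX : IsKHeight G k X) (hY : IsKHeight G k Y) :
    HeightPath G k (heightDist X Y) X Y := by
  induction hn : heightDist X Y generalizing X Y with
  | zero => exact heightPath_zero_iff.mpr (heightDist_eq_zero_iff.mp hn)
  | succ n ih =>
    by_cases hdown : ∃ v, Y v < X v
    · obtain ⟨X', hXX', hd⟩ := exists_heightStep_heightDist_add_one_eq hX hY hdown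
      exact heightPath_succ_iff.mpr ⟨X', hXX', ih hXX'.2.1 hY (by omega)⟩
    · have hup : ∃ v, X v < Y v := by
        by_contra! hle
        have : X = Y := funext fun v => le_antisymm (not_lt.mp fun h => hdown ⟨v, h⟩) (hle v)
        simp [heightDist_eq_zero_iff.mpr this] at hn
      obtain ⟨Y', hYY', hd⟩ := exists_heightStep_heightDist_add_one_eq hY hX hup
      rw [heightDist_comm] at hn
      exact (heightPath_succ_iff.mpr ⟨Y', hYY', (ih hX hYY'.2.1 (by
        rw [heightDist_comm]; omega)).symm⟩).symm

end heightDist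

end

/-- The minimum number of admissible single-vertex ±1 moves transforming the
`k`-height `X` into the `k`-height `Y` equals `δ(X,Y) = Σ_v |X v − Y v|`. -/
theorem heightDist_eq_min_moves {V : Type*} [Fintype V]
    (G : SimpleGraph V) (k : ℕ) (X Y : V → ℕ)
    (hX : IsKHeight G k X) (hY : IsKHeight G k Y) :
    IsLeast {n : ℕ | ∃ f : ℕ → V → ℕ, f 0 = X ∧ f n = Y ∧
        ∀ i < n, HeightStep G k (f i) (f (i + 1))}
      (heightDist X Y) :=
  ⟨heightPath_heightDist hX hY, fun _ h => HeightPath.heightDist_le h⟩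
end

section
/- Let X ≤ Y be k-heights of a finite graph G=(V,E) and let B ⊆ V. Let Ω_{B|X} (resp. Ω_{B|Y}) denote the set of k-heights φ on the induced subgraph G[B] such that replacing the values of X (resp. Y) on B by φ yields a valid k-height of G. Let D be the smallest sublattice of the lattice of k-heights of G[B] (under pointwise min and max) containing Ω_{B|X} ∪ Ω_{B|Y}. Then Ω_{B|X} is a downset in D and Ω_{B|Y} is an upset in D. -/
/-- Replace the values of `X` on `B` by the filling `φ`. -/
def replaceOn {V : Type*} (B : Set V) [DecidablePred (· ∈ B)]
    (X : V → ℕ) (φ : ↥B → ℕ) : V → ℕ :=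
  fun v => if h : v ∈ B then φ ⟨v, h⟩ else X v

/-- The `k`-heights of the induced subgraph `G[B]`. -/
def heightsOn {V : Type*} (G : SimpleGraph V) (k : ℕ) (B : Set V) : Set (↥B → ℕ) :=
  {φ | IsKHeight (G.induce B) k φ}

/-- The admissible fillings `Ω_{B|X}`: `k`-heights of `G[B]` whose insertion
into `X` yields a valid `k`-height of `G`. -/
def admissibleFillings {V : Type*} (G : SimpleGraph V) (k : ℕ) (B : Set V)
    [DecidablePred (· ∈ B)] (X : V → ℕ) : Set (↥B → ℕ) :=
  {φ | IsKHeight (G.induce B) k φ ∧ IsKHeight G k (replaceOn B X φ)}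

lemma induce_adj' {V : Type*} (G : SimpleGraph V) (B : Set V) (a b : ↥B) :
    (G.induce B).Adj a b ↔ G.Adj a b := Iff.rfl

lemma replace_isKHeight {V : Type*} (G : SimpleGraph V) (k : ℕ) (B : Set V)
    [DecidablePred (· ∈ B)] (X : V → ℕ) (φ : ↥B → ℕ)
    (hφ : IsKHeight (G.induce B) k φ) (hX : IsKHeight G k X)
    (hcross : ∀ (v : V) (hv : v ∈ B) (w : V), w ∉ B → G.Adj v w →
      |(φ ⟨v, hv⟩ : ℤ) - X w| ≤ 1) :
    IsKHeight G k (replaceOn B X φ) := by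
  constructor
  · intro v
    by_cases h : v ∈ B <;> simp [replaceOn, h]
    · exact hφ.1 _
    · exact hX.1 v
  · intro v w hadj
    by_cases hv : v ∈ B <;> by_cases hw : w ∈ B <;> simp [replaceOn, hv, hw]
    · exact hφ.2 (show (G.induce B).Adj ⟨v, hv⟩ ⟨w, hw⟩ from hadj)
    · exact hcross v hv w hw hadj
    · have := hcross w hw v hv hadj.symm
      rw [abs_sub_comm] at this; exact this
    · exact hX.2 hadj

lemma heightsOn_sup {V : Type*} (G : SimpleGraph V) (k : ℕ) (B : Set V)
    (a b : ↥B → ℕ) (ha : a ∈ heightsOn G k B) (hb : b ∈ heightsOn G k B) :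
    a ⊔ b ∈ heightsOn G k B := by
  constructor
  · intro v
    have := ha.1 v; have := hb.1 v
    simp only [Pi.sup_apply]; omega
  · intro v w hadj
    have h1 := ha.2 hadj; have h2 := hb.2 hadj
    simp only [Pi.sup_apply] at *
    rw [abs_le] at *; push_cast at *; omega

lemma heightsOn_inf {V : Type*} (G : SimpleGraph V) (k : ℕ) (B : Set V)
    (a b : ↥B → ℕ) (ha : a ∈ heightsOn G k B) (hb : b ∈ heightsOn G k B) :
    a ⊓ b ∈ heightsOn G k B := by
  constructor
  · intro v
    have := ha.1 v
    simp only [Pi.inf_apply]; omega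
  · intro v w hadj
    have h1 := ha.2 hadj; have h2 := hb.2 hadj
    simp only [Pi.inf_apply] at *
    rw [abs_le] at *; push_cast at *; omega

/-- In the smallest sublattice `D` of the lattice of `k`-heights of `G[B]`
containing `Ω_{B|X} ∪ Ω_{B|Y}`, the set `Ω_{B|X}` is a downset and `Ω_{B|Y}`
is an upset. -/
theorem admissibleFillings_downset_upset {V : Type*} [Fintype V]
    (G : SimpleGraph V) (k : ℕ) (B : Set V) [DecidablePred (· ∈ B)]
    (X Y : V → ℕ) (hX : IsKHeight G k X) (hY : IsKHeight G k Y) (hXY : X ≤ Y) :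
    ∀ D : Set (↥B → ℕ),
      D = ⋂₀ {T : Set (↥B → ℕ) |
            (admissibleFillings G k B X ∪ admissibleFillings G k B Y) ⊆ T ∧
            T ⊆ heightsOn G k B ∧
            ∀ a b, a ∈ T → b ∈ T → a ⊔ b ∈ T ∧ a ⊓ b ∈ T} →
      (∀ g h, g ∈ D → h ∈ D → g ≤ h →
          h ∈ admissibleFillings G k B X → g ∈ admissibleFillings G k B X) ∧
      (∀ g h, g ∈ D → h ∈ D → g ≤ h →
          g ∈ admissibleFillings G k B Y → h ∈ admissibleFillings G k B Y) := by
  intro D hD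
  -- the "certifying" superset T0
  set T0 : Set (↥B → ℕ) := {φ | φ ∈ heightsOn G k B ∧
      ∀ (v : V) (hv : v ∈ B) (w : V), w ∉ B → G.Adj v w →
        X w ≤ φ ⟨v, hv⟩ + 1 ∧ φ ⟨v, hv⟩ ≤ Y w + 1} with hT0
  have cross_of : ∀ (Z : V → ℕ) (φ : ↥B → ℕ), IsKHeight G k (replaceOn B Z φ) →
      ∀ (v : V) (hv : v ∈ B) (w : V), w ∉ B → G.Adj v w →
        Z w ≤ φ ⟨v, hv⟩ + 1 ∧ φ ⟨v, hv⟩ ≤ Z w + 1 := by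
    intro Z φ hφ v hv w hw hadj
    have := hφ.2 hadj
    simp only [replaceOn, dif_pos hv, dif_neg hw] at this
    rw [abs_le] at this; omega
  have hT0mem : T0 ∈ {T : Set (↥B → ℕ) |
      (admissibleFillings G k B X ∪ admissibleFillings G k B Y) ⊆ T ∧
      T ⊆ heightsOn G k B ∧
      ∀ a b, a ∈ T → b ∈ T → a ⊔ b ∈ T ∧ a ⊓ b ∈ T} := by
    refine ⟨?_, fun φ hφ => hφ.1, ?_⟩
    · rintro φ (hφ | hφ)
      · refine ⟨hφ.1, fun v hv w hw hadj => ?_⟩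
        have h1 := cross_of X φ hφ.2 v hv w hw hadj
        have h2 : X w ≤ Y w := hXY w
        omega
      · refine ⟨hφ.1, fun v hv w hw hadj => ?_⟩
        have h1 := cross_of Y φ hφ.2 v hv w hw hadj
        have h2 : X w ≤ Y w := hXY w
        omega
    · intro a b ha hb
      refine ⟨⟨heightsOn_sup G k B a b ha.1 hb.1, fun v hv w hw hadj => ?_⟩,
              ⟨heightsOn_inf G k B a b ha.1 hb.1, fun v hv w hw hadj => ?_⟩⟩
      · have h1 := ha.2 v hv w hw hadj; have h2 := hb.2 v hv w hw hadj
        simp only [Pi.sup_apply]; omega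
      · have h1 := ha.2 v hv w hw hadj; have h2 := hb.2 v hv w hw hadj
        simp only [Pi.inf_apply]; omega
  have hDsub : D ⊆ T0 := by
    rw [hD]; exact Set.sInter_subset_of_mem hT0mem
  constructor
  · intro g h hg hh hgh hhX
    have hgT0 := hDsub hg
    refine ⟨hgT0.1, replace_isKHeight G k B X g hgT0.1 hX ?_⟩
    intro v hv w hw hadj
    have h1 := hgT0.2 v hv w hw hadj
    have h2 := cross_of X h hhX.2 v hv w hw hadj
    have h3 : g ⟨v, hv⟩ ≤ h ⟨v, hv⟩ := hgh ⟨v, hv⟩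
    rw [abs_le]; omega
  · intro g h hg hh hgh hgY
    have hhT0 := hDsub hh
    refine ⟨hhT0.1, replace_isKHeight G k B Y h hhT0.1 hY ?_⟩
    intro v hv w hw hadj
    have h1 := hhT0.2 v hv w hw hadj
    have h2 := cross_of Y g hgY.2 v hv w hw hadj
    have h3 : g ⟨v, hv⟩ ≤ h ⟨v, hv⟩ := hgh ⟨v, hv⟩
    rw [abs_le]; omega
end

section
/- Let D be a finite distributive lattice, let L ⊆ D be a nonempty downset and M ⊆ D a nonempty upset, and let U ⊆ D be an upset. Then |U∩M|·|L| ≥ |U∩L|·|M|; equivalently, the uniform distribution on L is stochastically dominated by the uniform distribution on M. -/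
/-!
Daykin's inequality `|s|·|t| ≤ |s ⊼ t|·|s ⊻ t|` (the four functions theorem with constant
weights), applied to `s = U ∩ L` and `t = M`: as `L` is a downset, `s ⊼ t ⊆ L`, and as `U` and `M`
are upsets, `s ⊻ t ⊆ U ∩ M`.
-/

open scoped SetFamily

theorem Set.ncard_mul_ncard_le_ncard_infs_mul_ncard_sups {α : Type*} [DistribLattice α]
    {s t : Set α} (hs : s.Finite) (ht : t.Finite) :
    s.ncard * t.ncard ≤ (s ⊼ t).ncard * (s ⊻ t).ncard := by
  classical
  lift s to Finset α using hs
  lift t to Finset α using ht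
  rw [← Finset.coe_infs, ← Finset.coe_sups]
  simp only [Set.ncard_coe_finset]
  exact Finset.le_card_infs_mul_card_sups s t

section UpperLower

variable {α : Type*} [Lattice α] {L M U : Set α}

theorem IsLowerSet.inter_infs_subset (hL : IsLowerSet L) : (U ∩ L) ⊼ M ⊆ L := by
  rintro _ ⟨a, ha, b, -, rfl⟩
  exact hL inf_le_left ha.2

theorem IsUpperSet.inter_sups_subset_inter (hM : IsUpperSet M) (hU : IsUpperSet U) :
    (U ∩ L) ⊻ M ⊆ U ∩ M := by
  rintro _ ⟨a, ha, b, hb, rfl⟩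
  exact ⟨hU le_sup_left ha.1, hM le_sup_right hb⟩

end UpperLower

theorem downset_dominated_by_upset_general {D : Type*} [Fintype D] [DistribLattice D]
    (L M U : Set D)
    (hL : ∀ x y, x ∈ L → y ≤ x → y ∈ L)
    (hM : ∀ x y, x ∈ M → x ≤ y → y ∈ M)
    (hU : ∀ x y, x ∈ U → x ≤ y → y ∈ U) :
    (U ∩ L).ncard * M.ncard ≤ (U ∩ M).ncard * L.ncard := by
  have hL' : IsLowerSet L := fun x y hyx hx => hL x y hx hyx
  have hM' : IsUpperSet M := fun x y hxy hx => hM x y hx hxy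
  have hU' : IsUpperSet U := fun x y hxy hx => hU x y hx hxy
  calc (U ∩ L).ncard * M.ncard
      ≤ ((U ∩ L) ⊼ M).ncard * ((U ∩ L) ⊻ M).ncard :=
        Set.ncard_mul_ncard_le_ncard_infs_mul_ncard_sups (Set.toFinite _) (Set.toFinite _)
    _ ≤ L.ncard * (U ∩ M).ncard :=
        Nat.mul_le_mul (Set.ncard_le_ncard hL'.inter_infs_subset)
          (Set.ncard_le_ncard (hM'.inter_sups_subset_inter hU'))
    _ = (U ∩ M).ncard * L.ncard := mul_comm _ _

/-- In a finite distributive lattice, a nonempty downset `L` is stochastically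
dominated by a nonempty upset `M`: for every upset `U`,
`|U∩M|·|L| ≥ |U∩L|·|M|`. -/
theorem downset_dominated_by_upset {D : Type*} [Fintype D] [DistribLattice D]
    (L M U : Set D)
    (hL : ∀ x y, x ∈ L → y ≤ x → y ∈ L) (hLne : L.Nonempty)
    (hM : ∀ x y, x ∈ M → x ≤ y → y ∈ M) (hMne : M.Nonempty)
    (hU : ∀ x y, x ∈ U → x ≤ y → y ∈ U) :
    (U ∩ L).ncard * M.ncard ≤ (U ∩ M).ncard * L.ncard :=
  downset_dominated_by_upset_general L M U hL hM hU
end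

section
/- Let X ≤ Y be k-heights of a finite graph G=(V,E) and let B ⊆ V be a block such that both Ω_{B|X} and Ω_{B|Y} are nonempty. Then, viewed as distributions on the poset of k-heights of G[B], the uniform distribution on Ω_{B|X} is stochastically dominated by the uniform distribution on Ω_{B|Y}: for every upset U of the lattice of k-heights of G[B], |U ∩ Ω_{B|X}| / |Ω_{B|X}| ≤ |U ∩ Ω_{B|Y}| / |Ω_{B|Y}|. -/
/-! Pointwise meets and joins of heights are heights, and since `X ≤ Y`, the meet of
`φ ∈ Ω_{B|X}` and `ψ ∈ Ω_{B|Y}` lies in `Ω_{B|X}` and their join in `Ω_{B|Y}`. Daykin's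
inequality `|A| |T| ≤ |A ⊼ T| |A ⊻ T|`, applied to `A = U ∩ Ω_{B|X}` and `T = Ω_{B|Y}`, then gives
`|U ∩ Ω_{B|X}| |Ω_{B|Y}| ≤ |Ω_{B|X}| |U ∩ Ω_{B|Y}|`, because `U` is an upset. -/

open scoped FinsetFamily in
theorem Set.ncard_mul_ncard_le_of_inf_mem_of_sup_mem {α : Type*} [DistribLattice α]
    {s t u w : Set α} (hu : u.Finite) (hw : w.Finite)
    (hinf : ∀ a ∈ s, ∀ b ∈ t, a ⊓ b ∈ u) (hsup : ∀ a ∈ s, ∀ b ∈ t, a ⊔ b ∈ w) :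
    s.ncard * t.ncard ≤ u.ncard * w.ncard := by
  classical
  rcases s.finite_or_infinite with hs | hs
  swap
  · simp [hs.ncard]
  rcases t.finite_or_infinite with ht | ht
  swap
  · simp [ht.ncard]
  calc s.ncard * t.ncard = hs.toFinset.card * ht.toFinset.card := by
        rw [ncard_eq_toFinset_card s hs, ncard_eq_toFinset_card t ht]
    _ ≤ (hs.toFinset ⊼ ht.toFinset).card * (hs.toFinset ⊻ ht.toFinset).card :=
        Finset.le_card_infs_mul_card_sups _ _
    _ ≤ hu.toFinset.card * hw.toFinset.card := by
        gcongr
        · exact Finset.infs_subset_iff.2 fun a ha b hb ↦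
            hu.mem_toFinset.2 (hinf a (hs.mem_toFinset.1 ha) b (ht.mem_toFinset.1 hb))
        · exact Finset.sups_subset_iff.2 fun a ha b hb ↦
            hw.mem_toFinset.2 (hsup a (hs.mem_toFinset.1 ha) b (ht.mem_toFinset.1 hb))
    _ = u.ncard * w.ncard := by
        rw [ncard_eq_toFinset_card u hu, ncard_eq_toFinset_card w hw]

namespace IsKHeight

variable {V : Type*} {G : SimpleGraph V} {k : ℕ} {f g : V → ℕ}

theorem inf (hf : IsKHeight G k f) (hg : IsKHeight G k g) : IsKHeight G k (f ⊓ g) := by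
  refine ⟨fun v ↦ inf_le_left.trans (hf.1 v), fun v w hvw ↦ ?_⟩
  simpa only [Pi.inf_apply, Nat.cast_min] using
    (abs_min_sub_min_le_max _ _ _ _).trans (max_le (hf.2 hvw) (hg.2 hvw))

theorem sup (hf : IsKHeight G k f) (hg : IsKHeight G k g) : IsKHeight G k (f ⊔ g) := by
  refine ⟨fun v ↦ sup_le (hf.1 v) (hg.1 v), fun v w hvw ↦ ?_⟩
  simpa only [Pi.sup_apply, Nat.cast_max] using
    (abs_max_sub_max_le_max _ _ _ _).trans (max_le (hf.2 hvw) (hg.2 hvw))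

end IsKHeight

section Fillings

variable {V : Type*} {G : SimpleGraph V} {k : ℕ} {B : Set V} [DecidablePred (· ∈ B)]
  {X Y : V → ℕ}

theorem replaceOn_inf (hXY : X ≤ Y) (φ ψ : ↥B → ℕ) :
    replaceOn B X (φ ⊓ ψ) = replaceOn B X φ ⊓ replaceOn B Y ψ := by
  funext v
  by_cases hv : v ∈ B
  · simp [replaceOn, hv]
  · simp [replaceOn, hv, hXY v]

theorem replaceOn_sup (hXY : X ≤ Y) (φ ψ : ↥B → ℕ) :
    replaceOn B Y (φ ⊔ ψ) = replaceOn B X φ ⊔ replaceOn B Y ψ := by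
  funext v
  by_cases hv : v ∈ B
  · simp [replaceOn, hv]
  · simp [replaceOn, hv, hXY v]

theorem inf_mem_admissibleFillings (hXY : X ≤ Y) {φ ψ : ↥B → ℕ}
    (hφ : φ ∈ admissibleFillings G k B X) (hψ : ψ ∈ admissibleFillings G k B Y) :
    φ ⊓ ψ ∈ admissibleFillings G k B X :=
  ⟨hφ.1.inf hψ.1, replaceOn_inf hXY φ ψ ▸ hφ.2.inf hψ.2⟩

theorem sup_mem_admissibleFillings (hXY : X ≤ Y) {φ ψ : ↥B → ℕ}
    (hφ : φ ∈ admissibleFillings G k B X) (hψ : ψ ∈ admissibleFillings G k B Y) :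
    φ ⊔ ψ ∈ admissibleFillings G k B Y :=
  ⟨hφ.1.sup hψ.1, replaceOn_sup hXY φ ψ ▸ hφ.2.sup hψ.2⟩

theorem admissibleFillings_finite [Finite B] (X : V → ℕ) :
    (admissibleFillings G k B X).Finite :=
  (Set.Finite.pi fun _ ↦ Set.finite_Iic k).subset fun _ hφ v _ ↦ hφ.1.1 v

end Fillings

theorem uniform_fillings_stochastically_dominated_general {V : Type*} [Fintype V]
    (G : SimpleGraph V) (k : ℕ) (B : Set V) [DecidablePred (· ∈ B)]
    (X Y : V → ℕ) (hXY : X ≤ Y)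
    (hXne : (admissibleFillings G k B X).Nonempty)
    (hYne : (admissibleFillings G k B Y).Nonempty)
    (U : Set (↥B → ℕ))
    (hU : ∀ a b, a ∈ heightsOn G k B → b ∈ heightsOn G k B →
      a ∈ U → a ≤ b → b ∈ U) :
    ((U ∩ admissibleFillings G k B X).ncard : ℝ) / (admissibleFillings G k B X).ncard ≤
      ((U ∩ admissibleFillings G k B Y).ncard : ℝ) / (admissibleFillings G k B Y).ncard := by
  set S := admissibleFillings G k B X
  set T := admissibleFillings G k B Y
  have hS : S.Finite := admissibleFillings_finite X
  have hT : T.Finite := admissibleFillings_finite Y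
  have sup_mem : ∀ φ ∈ U ∩ S, ∀ ψ ∈ T, φ ⊔ ψ ∈ U ∩ T := fun φ hφ ψ hψ ↦
    have hsup := sup_mem_admissibleFillings hXY hφ.2 hψ
    ⟨hU φ _ hφ.2.1 hsup.1 hφ.1 le_sup_left, hsup⟩
  have daykin : (U ∩ S).ncard * T.ncard ≤ (U ∩ T).ncard * S.ncard :=
    (Set.ncard_mul_ncard_le_of_inf_mem_of_sup_mem hS (hT.subset Set.inter_subset_right)
      (fun φ hφ ψ hψ ↦ inf_mem_admissibleFillings hXY hφ.2 hψ) sup_mem).trans_eq (mul_comm _ _)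
  rw [div_le_div_iff₀ (mod_cast (Set.ncard_pos hS).2 hXne) (mod_cast (Set.ncard_pos hT).2 hYne)]
  exact_mod_cast daykin

/-- For `k`-heights `X ≤ Y`, the uniform distribution on `Ω_{B|X}` is
stochastically dominated by the uniform distribution on `Ω_{B|Y}`: for every
upset `U` of the lattice of `k`-heights of `G[B]`,
`|U ∩ Ω_{B|X}|/|Ω_{B|X}| ≤ |U ∩ Ω_{B|Y}|/|Ω_{B|Y}|`. -/
theorem uniform_fillings_stochastically_dominated {V : Type*} [Fintype V]
    (G : SimpleGraph V) (k : ℕ) (B : Set V) [DecidablePred (· ∈ B)]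
    (X Y : V → ℕ) (hX : IsKHeight G k X) (hY : IsKHeight G k Y) (hXY : X ≤ Y)
    (hXne : (admissibleFillings G k B X).Nonempty)
    (hYne : (admissibleFillings G k B Y).Nonempty)
    (U : Set (↥B → ℕ)) (hUsub : U ⊆ heightsOn G k B)
    (hU : ∀ a b, a ∈ heightsOn G k B → b ∈ heightsOn G k B →
      a ∈ U → a ≤ b → b ∈ U) :
    ((U ∩ admissibleFillings G k B X).ncard : ℝ) / (admissibleFillings G k B X).ncard ≤
      ((U ∩ admissibleFillings G k B Y).ncard : ℝ) / (admissibleFillings G k B Y).ncard :=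
  uniform_fillings_stochastically_dominated_general G k B X Y hXY hXne hYne U hU
end

section
/- Let P be a finite partially ordered set and μ₁, μ₂ probability distributions on P such that μ₁ is stochastically dominated by μ₂ (i.e., μ₁(U) ≤ μ₂(U) for every upset U ⊆ P). Then there exists a probability distribution λ on P × P whose first marginal is μ₁ and second marginal is μ₂, and such that λ(x,y) > 0 implies x ≤ y. -/
/-!
Consider transport plans that move mass only upward and leave the unsent mass still dominated
by the unreceived mass. They form a compact set, so one of them moves maximal mass. If it left
mass unsent at `x₀`, let `T` be the largest upset avoiding `x₀` on which the residuals agree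
(tight upsets are closed under union by modularity). Domination on `T ∪ Ici x₀` yields `y ≥ x₀`
outside `T` with unreceived mass, and every upset containing `y` but not `x₀` has slack, so a
little more mass can be sent from `x₀` to `y`. Once all mass is sent, equal totals force all
mass to be received.
-/

open Finset Filter Topology

section Domination

variable {P : Type*} [Preorder P]

def UpsetDominated (μ ν : P → ℝ) : Prop :=
  ∀ U : Finset P, IsUpperSet (U : Set P) → ∑ x ∈ U, μ x ≤ ∑ x ∈ U, ν x

variable {μ ν : P → ℝ}

theorem UpsetDominated.sum_union_eq [DecidableEq P] (h : UpsetDominated μ ν) {U V : Finset P}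
    (hU : IsUpperSet (U : Set P)) (hV : IsUpperSet (V : Set P))
    (hUt : ∑ x ∈ U, μ x = ∑ x ∈ U, ν x) (hVt : ∑ x ∈ V, μ x = ∑ x ∈ V, ν x) :
    ∑ x ∈ U ∪ V, μ x = ∑ x ∈ U ∪ V, ν x := by
  have hunion := h (U ∪ V) (by rw [coe_union]; exact hU.union hV)
  have hinter := h (U ∩ V) (by rw [coe_inter]; exact hU.inter hV)
  have hμ := sum_union_inter (s₁ := U) (s₂ := V) (f := μ)
  have hν := sum_union_inter (s₁ := U) (s₂ := V) (f := ν)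
  linarith

theorem UpsetDominated.exists_le_forall_sum_lt [Fintype P] (h : UpsetDominated μ ν)
    (hμ : 0 ≤ μ) {x₀ : P} (hx₀ : 0 < μ x₀) :
    ∃ y, x₀ ≤ y ∧ 0 < ν y ∧ ∀ U : Finset P, IsUpperSet (U : Set P) → y ∈ U → x₀ ∉ U →
      ∑ x ∈ U, μ x < ∑ x ∈ U, ν x := by
  classical
  set tight : Finset (Finset P) := univ.filter fun U =>
    IsUpperSet (U : Set P) ∧ x₀ ∉ U ∧ ∑ x ∈ U, μ x = ∑ x ∈ U, ν x
  obtain ⟨T, hT, hTmax⟩ :=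
    exists_max_image tight card ⟨∅, by simp [tight, isUpperSet_empty]⟩
  obtain ⟨-, hTup, hx₀T, hTt⟩ := mem_filter.1 hT
  have hsubT : ∀ U : Finset P, IsUpperSet (U : Set P) → x₀ ∉ U →
      ∑ x ∈ U, μ x = ∑ x ∈ U, ν x → U ⊆ T := by
    intro U hU hx₀U hUt
    have hTU : T ∪ U ∈ tight := mem_filter.2 ⟨mem_univ _,
      by rw [coe_union]; exact hTup.union hU, by simp [hx₀T, hx₀U], h.sum_union_eq hTup hU hTt hUt⟩
    exact union_eq_left.1 (eq_of_subset_of_card_le subset_union_left (hTmax _ hTU)).symm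
  set V := T ∪ (Set.Ici x₀).toFinset
  have hVup : IsUpperSet (V : Set P) := by
    rw [coe_union, Set.coe_toFinset]; exact hTup.union (isUpperSet_Ici x₀)
  have hx₀V : x₀ ∈ V := mem_union_right _ (Set.mem_toFinset.2 le_rfl)
  -- otherwise `ν(V) = ν(T) = μ(T) < μ(T) + μ x₀ ≤ μ(V)`
  obtain ⟨y, hyV, hy⟩ : ∃ y ∈ V \ T, 0 < ν y := by
    by_contra! hcon
    have hνV : ∑ x ∈ V, ν x ≤ ∑ x ∈ T, ν x := by
      rw [← sum_sdiff (subset_union_left : T ⊆ V)]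
      linarith [sum_nonpos hcon]
    have hμV : μ x₀ + ∑ x ∈ T, μ x ≤ ∑ x ∈ V, μ x := by
      rw [← sum_insert hx₀T]
      exact sum_le_sum_of_subset_of_nonneg (insert_subset hx₀V subset_union_left)
        fun x _ _ => hμ x
    linarith [h V hVup]
  obtain ⟨hyV, hyT⟩ := mem_sdiff.1 hyV
  have hx₀y : x₀ ≤ y := by simpa [V, hyT] using hyV
  exact ⟨y, hx₀y, hy, fun U hU hyU hx₀U =>
    (h U hU).lt_of_ne fun hUt => hyT (hsubT U hU hx₀U hUt hyU)⟩

theorem UpsetDominated.exists_sub_single [Fintype P] [DecidableEq P]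
    (h : UpsetDominated μ ν) (hμ : 0 ≤ μ) (hν : 0 ≤ ν) {x₀ : P} (hx₀ : 0 < μ x₀) :
    ∃ y, x₀ ≤ y ∧ ∃ ε > 0, 0 ≤ μ - Pi.single x₀ ε ∧ 0 ≤ ν - Pi.single y ε ∧
      UpsetDominated (μ - Pi.single x₀ ε) (ν - Pi.single y ε) := by
  obtain ⟨y, hx₀y, hy, hgap⟩ := h.exists_le_forall_sum_lt hμ hx₀
  have hsmall : ∀ᶠ ε in 𝓝[>] (0 : ℝ), ε ≤ μ x₀ ∧ ε ≤ ν y ∧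
      ∀ U : Finset P, IsUpperSet (U : Set P) → y ∈ U → x₀ ∉ U →
        ε ≤ ∑ x ∈ U, ν x - ∑ x ∈ U, μ x := by
    refine nhdsWithin_le_nhds
      ((eventually_le_nhds hx₀).and ((eventually_le_nhds hy).and ?_))
    refine eventually_all.2 fun U => ?_
    by_cases hU : IsUpperSet (U : Set P) ∧ y ∈ U ∧ x₀ ∉ U
    · filter_upwards [eventually_le_nhds (sub_pos.2 (hgap U hU.1 hU.2.1 hU.2.2))] with ε hε
        using fun _ _ _ => hε
    · exact .of_forall fun ε h₁ h₂ h₃ => absurd ⟨h₁, h₂, h₃⟩ hU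
  obtain ⟨ε, ⟨hεμ, hεν, hεgap⟩, hε⟩ := (hsmall.and self_mem_nhdsWithin).exists
  refine ⟨y, hx₀y, ε, hε, fun x => ?_, fun x => ?_, fun U hU => ?_⟩
  · rcases eq_or_ne x x₀ with rfl | hx
    · simpa using hεμ
    · simpa [hx] using hμ x
  · rcases eq_or_ne x y with rfl | hx
    · simpa using hεν
    · simpa [hx] using hν x
  · simp only [Pi.sub_apply, sum_sub_distrib, sum_pi_single']
    have hUdom := h U hU
    by_cases hx₀U : x₀ ∈ U
    · rw [if_pos hx₀U, if_pos (show y ∈ U from hU hx₀y hx₀U)]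
      linarith
    by_cases hyU : y ∈ U
    · rw [if_neg hx₀U, if_pos hyU]
      linarith [hεgap U hU hyU hx₀U]
    · rw [if_neg hx₀U, if_neg hyU]
      linarith

end Domination

section Marginals

variable {P : Type*} [Fintype P]

def fstMarginal (lam : P × P → ℝ) (x : P) : ℝ := ∑ y, lam (x, y)

def sndMarginal (lam : P × P → ℝ) (y : P) : ℝ := ∑ x, lam (x, y)

@[fun_prop]
theorem continuous_fstMarginal : Continuous (fstMarginal : (P × P → ℝ) → P → ℝ) := by
  unfold fstMarginal; fun_prop

@[fun_prop]
theorem continuous_sndMarginal : Continuous (sndMarginal : (P × P → ℝ) → P → ℝ) := by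
  unfold sndMarginal; fun_prop

theorem sum_fstMarginal (lam : P × P → ℝ) : ∑ x, fstMarginal lam x = ∑ p, lam p :=
  (Fintype.sum_prod_type lam).symm

theorem sum_sndMarginal (lam : P × P → ℝ) : ∑ y, sndMarginal lam y = ∑ p, lam p := by
  rw [Fintype.sum_prod_type, sum_comm]; rfl

variable [DecidableEq P]

theorem fstMarginal_add_single (lam : P × P → ℝ) (x₀ y₀ : P) (ε : ℝ) :
    fstMarginal (lam + Pi.single (x₀, y₀) ε) = fstMarginal lam + Pi.single x₀ ε := by
  ext x
  simp [fstMarginal, sum_add_distrib, Pi.single_apply, Prod.ext_iff, ite_and]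

theorem sndMarginal_add_single (lam : P × P → ℝ) (x₀ y₀ : P) (ε : ℝ) :
    sndMarginal (lam + Pi.single (x₀, y₀) ε) = sndMarginal lam + Pi.single y₀ ε := by
  ext y
  simp [sndMarginal, sum_add_distrib, Pi.single_apply, Prod.ext_iff, ite_and]

end Marginals

section PartialCouplings

variable {P : Type*} [Fintype P] [Preorder P]

def partialCouplings (μ₁ μ₂ : P → ℝ) : Set (P × P → ℝ) :=
  {lam | 0 ≤ lam ∧ (∀ x y, ¬x ≤ y → lam (x, y) = 0) ∧ 0 ≤ μ₁ - fstMarginal lam ∧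
    0 ≤ μ₂ - sndMarginal lam ∧ UpsetDominated (μ₁ - fstMarginal lam) (μ₂ - sndMarginal lam)}

variable {μ₁ μ₂ : P → ℝ}

theorem zero_mem_partialCouplings (h₁ : 0 ≤ μ₁) (h₂ : 0 ≤ μ₂) (hdom : UpsetDominated μ₁ μ₂) :
    0 ∈ partialCouplings μ₁ μ₂ := by
  have hfst : fstMarginal (0 : P × P → ℝ) = 0 := funext fun _ => sum_const_zero
  have hsnd : sndMarginal (0 : P × P → ℝ) = 0 := funext fun _ => sum_const_zero
  simpa [partialCouplings, hfst, hsnd] using ⟨h₁, h₂, hdom⟩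

theorem isCompact_partialCouplings : IsCompact (partialCouplings μ₁ μ₂) := by
  refine (isCompact_Icc (a := 0) (b := fun p => μ₁ p.1)).of_isClosed_subset ?_ ?_
  · simp only [partialCouplings, UpsetDominated, Set.ofPred_and, Set.ofPred_forall]
    refine isClosed_Ici.inter (.inter ?_ (.inter ?_ (.inter ?_ ?_)))
    · exact isClosed_iInter fun x => isClosed_iInter fun y => isClosed_iInter fun _ =>
        isClosed_eq (continuous_apply _) continuous_const
    · exact isClosed_le continuous_const (by fun_prop)
    · exact isClosed_le continuous_const (by fun_prop)
    · exact isClosed_iInter fun U => isClosed_iInter fun _ =>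
        isClosed_le (by fun_prop) (by fun_prop)
  · rintro lam ⟨hlam, -, hfst, -⟩
    refine ⟨hlam, fun ⟨x, y⟩ => ?_⟩
    calc lam (x, y) ≤ fstMarginal lam x := single_le_sum (fun y _ => hlam (x, y)) (mem_univ y)
      _ ≤ μ₁ x := sub_nonneg.1 (hfst x)

theorem exists_add_single_mem_partialCouplings [DecidableEq P] {lam : P × P → ℝ}
    (hlam : lam ∈ partialCouplings μ₁ μ₂) {x₀ : P} (hx₀ : fstMarginal lam x₀ < μ₁ x₀) :
    ∃ y₀, ∃ ε > 0, lam + Pi.single (x₀, y₀) ε ∈ partialCouplings μ₁ μ₂ := by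
  obtain ⟨hnonneg, hsupp, hres₁, hres₂, hdom⟩ := hlam
  obtain ⟨y₀, hx₀y₀, ε, hε, hres₁', hres₂', hdom'⟩ :=
    hdom.exists_sub_single hres₁ hres₂ (sub_pos.2 hx₀)
  refine ⟨y₀, ε, hε, add_nonneg hnonneg (Pi.single_nonneg.2 hε.le), fun x y hxy => ?_, ?_⟩
  · have hne : (x, y) ≠ (x₀, y₀) := by
      rintro ⟨rfl, rfl⟩
      exact hxy hx₀y₀
    simp [hsupp x y hxy, hne]
  · simpa only [fstMarginal_add_single, sndMarginal_add_single, sub_add_eq_sub_sub]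
      using ⟨hres₁', hres₂', hdom'⟩

theorem exists_mem_partialCouplings_marginal_eq (h₁ : 0 ≤ μ₁) (h₂ : 0 ≤ μ₂)
    (hsum : ∑ x, μ₁ x = ∑ x, μ₂ x) (hdom : UpsetDominated μ₁ μ₂) :
    ∃ lam ∈ partialCouplings μ₁ μ₂, fstMarginal lam = μ₁ ∧ sndMarginal lam = μ₂ := by
  classical
  obtain ⟨lam, hlam, hmax⟩ := isCompact_partialCouplings.exists_isMaxOn
    ⟨0, zero_mem_partialCouplings h₁ h₂ hdom⟩ (f := fun lam => ∑ p, lam p) (by fun_prop)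
  have ⟨_, _, hres₁, hres₂, _⟩ := hlam
  have hfst : fstMarginal lam = μ₁ := by
    refine funext fun x₀ => (sub_nonneg.1 (hres₁ x₀)).antisymm (not_lt.1 fun hx₀ => ?_)
    obtain ⟨y₀, ε, hε, hmem⟩ := exists_add_single_mem_partialCouplings hlam hx₀
    have hle : ∑ p, lam p + ε ≤ ∑ p, lam p := by simpa [sum_add_distrib] using hmax hmem
    linarith
  have hsum₂ : ∑ y, (μ₂ - sndMarginal lam) y = 0 := by
    simp only [Pi.sub_apply, sum_sub_distrib, sum_sndMarginal, ← sum_fstMarginal, hfst, hsum,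
      sub_self]
  have hsnd := (Fintype.sum_eq_zero_iff_of_nonneg hres₂).1 hsum₂
  exact ⟨lam, hlam, hfst, (sub_eq_zero.1 hsnd).symm⟩

end PartialCouplings

/-- Discrete Strassen theorem: if a probability distribution `μ₁` on a finite
poset `P` is stochastically dominated by `μ₂`, then there is a joint
distribution `λ` on `P × P` with marginals `μ₁` and `μ₂` that is supported on
pairs `(x, y)` with `x ≤ y`. -/
theorem discrete_strassen {P : Type*} [Fintype P] [PartialOrder P]
    (μ₁ μ₂ : P → ℝ)
    (h₁ : ∀ x, 0 ≤ μ₁ x) (h₂ : ∀ x, 0 ≤ μ₂ x)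
    (hs₁ : ∑ x, μ₁ x = 1) (hs₂ : ∑ x, μ₂ x = 1)
    (hdom : ∀ U : Finset P, (∀ x y, x ∈ U → x ≤ y → y ∈ U) →
      ∑ x ∈ U, μ₁ x ≤ ∑ x ∈ U, μ₂ x) :
    ∃ lam : P × P → ℝ,
      (∀ p, 0 ≤ lam p) ∧
      (∀ x, ∑ y, lam (x, y) = μ₁ x) ∧
      (∀ y, ∑ x, lam (x, y) = μ₂ y) ∧
      (∀ x y, 0 < lam (x, y) → x ≤ y) := by
  obtain ⟨lam, ⟨hnonneg, hsupp, -⟩, hfst, hsnd⟩ :=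
    exists_mem_partialCouplings_marginal_eq h₁ h₂ (hs₁.trans hs₂.symm)
      fun U hU => hdom U fun _ _ hx hxy => hU hxy hx
  exact ⟨lam, hnonneg, congrFun hfst, congrFun hsnd,
    fun x y hpos => not_not.1 fun hxy => hpos.ne' (hsupp x y hxy)⟩
end
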